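/- For any positive constants c, σ̄, λ, μ with μ < 1, there exists τ̄ > 0, depending only on c, σ̄, λ, μ, such that u^{BS}(μσ; τ, x, k) + c·eˣ·σ²·τ ≤ u^{BS}(σ; τ, x, k) for all τ ∈ [0, τ̄], all 0 < σ ≤ σ̄, and all x, k with |x − k| ≤ λ·σ·√τ. -/

import Mathlib

/-
With `m = x - k` and total volatility `b = σ√τ`, the price is `eˣ · f(b)` where
`f(b) = 𝒩(m/b + b/2) - e^{-m} 𝒩(m/b - b/2)`, and `f'(b) = φ(m/b + b/2)` (the vega).
On `[μa, a]` with `a = σ√τ ≤ 1` and `|m| ≤ λa`, the argument of `φ` stays in `[-(λ/μ + 1/2), λ/μ + 1/2]`,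
so the mean value theorem gives `f(a) - f(μa) ≥ φ(λ/μ + 1/2) (1 - μ) a`, which beats `c a² = c σ² τ`
once `a` is small.
-/

noncomputable def Gauss (t x : ℝ) : ℝ :=
  (Real.sqrt (2 * Real.pi * t))⁻¹ * Real.exp (-x ^ 2 / (2 * t))

/-- Standard normal cumulative distribution function. -/
noncomputable def normalCDF (x : ℝ) : ℝ :=
  (Real.sqrt (2 * Real.pi))⁻¹ * ∫ s in Set.Iic x, Real.exp (-s ^ 2 / 2)

/-- Black–Scholes call price `u^{BS}(σ; τ, x, k)` in log variables. -/
noncomputable def uBS (σ τ x k : ℝ) : ℝ :=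
  Real.exp x * normalCDF ((x - k + σ ^ 2 * τ / 2) / (σ * Real.sqrt τ)) -
    Real.exp k * normalCDF ((x - k - σ ^ 2 * τ / 2) / (σ * Real.sqrt τ))

/-- Black–Scholes price extended to `τ = 0` by the call payoff. -/
noncomputable def uBS₀ (σ τ x k : ℝ) : ℝ :=
  if 0 < τ then uBS σ τ x k else max (Real.exp x - Real.exp k) 0

open Real MeasureTheory Set

noncomputable def normalPDF (x : ℝ) : ℝ :=
  (√(2 * π))⁻¹ * exp (-x ^ 2 / 2)

lemma normalPDF_pos (x : ℝ) : 0 < normalPDF x := by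
  unfold normalPDF; positivity

lemma normalPDF_le_normalPDF_of_abs_le {x y : ℝ} (h : |x| ≤ |y|) : normalPDF y ≤ normalPDF x := by
  unfold normalPDF
  gcongr ?_ * exp (-?_ / 2)
  exact sq_le_sq.2 h

lemma integrable_exp_neg_sq_div_two : Integrable fun s : ℝ => exp (-s ^ 2 / 2) := by
  simpa [neg_div, div_eq_inv_mul] using integrable_exp_neg_mul_sq (b := 1 / 2) (by norm_num)

lemma hasDerivAt_normalCDF (x : ℝ) : HasDerivAt normalCDF (normalPDF x) x := by
  have hcont : Continuous fun s : ℝ => exp (-s ^ 2 / 2) := by fun_prop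
  have hsplit : normalCDF = fun y =>
      normalCDF 0 + (√(2 * π))⁻¹ * ∫ t in (0 : ℝ)..y, exp (-t ^ 2 / 2) := by
    funext y
    rw [← intervalIntegral.integral_Iic_sub_Iic integrable_exp_neg_sq_div_two.integrableOn
      integrable_exp_neg_sq_div_two.integrableOn]
    unfold normalCDF
    ring
  rw [hsplit]
  exact ((intervalIntegral.integral_hasDerivAt_right
    integrable_exp_neg_sq_div_two.intervalIntegrable (hcont.stronglyMeasurableAtFilter _ _)
    hcont.continuousAt).const_mul _).const_add _

/-- The Black–Scholes call price divided by `eˣ`, in terms of the log-moneyness `m = x - k`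
and the total volatility `b = σ√τ`. -/
noncomputable def normalizedCall (m b : ℝ) : ℝ :=
  normalCDF (m / b + b / 2) - exp (-m) * normalCDF (m / b - b / 2)

lemma uBS_eq_exp_mul_normalizedCall {σ τ : ℝ} (hσ : σ ≠ 0) (hτ : 0 < τ) (x k : ℝ) :
    uBS σ τ x k = exp x * normalizedCall (x - k) (σ * √τ) := by
  have hb : σ * √τ ≠ 0 := mul_ne_zero hσ (sqrt_pos.2 hτ).ne'
  have hvar : σ ^ 2 * τ = (σ * √τ) ^ 2 := by rw [mul_pow, sq_sqrt hτ.le]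
  have hk : exp k = exp x * exp (-(x - k)) := by rw [← exp_add]; ring_nf
  unfold uBS normalizedCall
  rw [hvar, hk]
  field_simp

lemma hasDerivAt_normalizedCall (m : ℝ) {b : ℝ} (hb : b ≠ 0) :
    HasDerivAt (normalizedCall m) (normalPDF (m / b + b / 2)) b := by
  have hplus : HasDerivAt (fun b : ℝ => m / b + b / 2) (m * -(b ^ 2)⁻¹ + 1 / 2) b := by
    simpa [div_eq_mul_inv] using
      ((hasDerivAt_inv hb).const_mul m).fun_add ((hasDerivAt_id b).div_const 2)
  have hminus : HasDerivAt (fun b : ℝ => m / b - b / 2) (m * -(b ^ 2)⁻¹ - 1 / 2) b := by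
    simpa [div_eq_mul_inv] using
      ((hasDerivAt_inv hb).const_mul m).fun_sub ((hasDerivAt_id b).div_const 2)
  -- the two density terms combine into one: this is the vega identity
  have hdensity : exp (-m) * normalPDF (m / b - b / 2) = normalPDF (m / b + b / 2) := by
    unfold normalPDF
    rw [mul_left_comm, ← exp_add]
    congr 2
    field_simp
    ring
  refine (((hasDerivAt_normalCDF _).comp b hplus).fun_sub
    (((hasDerivAt_normalCDF _).comp b hminus).const_mul (exp (-m)))).congr_deriv ?_
  rw [← mul_assoc, hdensity]
  ring

lemma abs_div_add_half_le {m lam μ a b : ℝ} (hμ : 0 < μ) (ha1 : a ≤ 1) (hm : |m| ≤ lam * a)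
    (hb : b ∈ Icc (μ * a) a) (hb0 : 0 < b) : |m / b + b / 2| ≤ lam / μ + 1 / 2 := by
  have ha : 0 < a := by nlinarith [hb.2]
  have hlam : 0 ≤ lam := nonneg_of_mul_nonneg_left ((abs_nonneg m).trans hm) ha
  have hmb : |m / b| ≤ lam / μ := by
    rw [abs_div, abs_of_pos hb0, div_le_div_iff₀ hb0 hμ]
    nlinarith [hb.1]
  have hhalf : |b / 2| ≤ 1 / 2 := by
    rw [abs_of_pos (half_pos hb0)]
    linarith [hb.2]
  exact (abs_add_le _ _).trans (add_le_add hmb hhalf)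

lemma normalPDF_mul_le_normalizedCall_sub {m lam μ a : ℝ} (hμ : 0 < μ) (hμ1 : μ ≤ 1)
    (ha : 0 < a) (ha1 : a ≤ 1) (hm : |m| ≤ lam * a) :
    normalPDF (lam / μ + 1 / 2) * ((1 - μ) * a) ≤
      normalizedCall m a - normalizedCall m (μ * a) := by
  have hμa : 0 < μ * a := mul_pos hμ ha
  have hderiv : ∀ b ∈ Icc (μ * a) a,
      HasDerivAt (normalizedCall m) (normalPDF (m / b + b / 2)) b := fun b hb =>
    hasDerivAt_normalizedCall m (hμa.trans_le hb.1).ne'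
  have hmvt := (convex_Icc (μ * a) a).mul_sub_le_image_sub_of_le_deriv
    (fun b hb => (hderiv b hb).continuousAt.continuousWithinAt)
    (fun b hb => (hderiv b (interior_subset hb)).differentiableAt.differentiableWithinAt)
    (C := normalPDF (lam / μ + 1 / 2)) ?_ (μ * a) (left_mem_Icc.2 (by nlinarith))
    a (right_mem_Icc.2 (by nlinarith)) (by nlinarith)
  · rwa [← one_sub_mul] at hmvt
  · intro b hb
    rw [interior_Icc] at hb
    have hb0 : 0 < b := hμa.trans hb.1
    rw [(hderiv b (Ioo_subset_Icc_self hb)).deriv]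
    refine normalPDF_le_normalPDF_of_abs_le ?_
    exact (abs_div_add_half_le hμ ha1 hm (Ioo_subset_Icc_self hb) hb0).trans (le_abs_self _)

lemma mul_sq_le_normalizedCall_sub {c m lam μ a : ℝ} (hc : 0 < c) (hμ : 0 < μ) (hμ1 : μ ≤ 1)
    (ha : 0 < a) (haδ : a ≤ min 1 (normalPDF (lam / μ + 1 / 2) * (1 - μ) / c))
    (hm : |m| ≤ lam * a) :
    c * a ^ 2 ≤ normalizedCall m a - normalizedCall m (μ * a) := by
  have hgain := normalPDF_mul_le_normalizedCall_sub hμ hμ1 ha (haδ.trans (min_le_left _ _)) hm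
  have hcost : c * a ≤ normalPDF (lam / μ + 1 / 2) * (1 - μ) :=
    (le_div_iff₀' hc).1 (haδ.trans (min_le_right _ _))
  nlinarith

theorem stmt_4_general (c σbar lam μ : ℝ) (hc : 0 < c) (hσbar : 0 < σbar)
    (hμ : 0 < μ) (hμ1 : μ < 1) :
    ∃ τbar > 0, ∀ τ ∈ Set.Icc (0:ℝ) τbar, ∀ σ : ℝ, 0 < σ → σ ≤ σbar → ∀ x k : ℝ,
      |x - k| ≤ lam * σ * Real.sqrt τ →
        uBS₀ (μ * σ) τ x k + c * Real.exp x * σ ^ 2 * τ ≤ uBS₀ σ τ x k := by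
  set δ := min 1 (normalPDF (lam / μ + 1 / 2) * (1 - μ) / c)
  have hδ : 0 < δ := lt_min one_pos (div_pos (mul_pos (normalPDF_pos _) (by linarith)) hc)
  refine ⟨(δ / σbar) ^ 2, by positivity, ?_⟩
  rintro τ ⟨hτ0, hτbar⟩ σ hσ hσσbar x k hxk
  rcases hτ0.eq_or_lt with rfl | hτ
  · simp [uBS₀]
  have ha : 0 < σ * √τ := mul_pos hσ (sqrt_pos.2 hτ)
  have haδ : σ * √τ ≤ δ := calc
    σ * √τ ≤ σbar * (δ / σbar) :=
      mul_le_mul hσσbar ((sqrt_le_left (by positivity)).2 hτbar) (sqrt_nonneg _) hσbar.le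
    _ = δ := mul_div_cancel₀ _ hσbar.ne'
  have hgain := mul_sq_le_normalizedCall_sub hc hμ hμ1.le ha haδ (by rwa [← mul_assoc])
  rw [mul_pow, sq_sqrt hτ0] at hgain
  simp only [uBS₀, if_pos hτ]
  rw [uBS_eq_exp_mul_normalizedCall hσ.ne' hτ, uBS_eq_exp_mul_normalizedCall (mul_pos hμ hσ).ne' hτ,
    mul_assoc μ]
  nlinarith [mul_le_mul_of_nonneg_left hgain (exp_pos x).le]

theorem stmt_4 (c σbar lam μ : ℝ) (hc : 0 < c) (hσbar : 0 < σbar) (hlam : 0 < lam)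
    (hμ : 0 < μ) (hμ1 : μ < 1) :
    ∃ τbar > 0, ∀ τ ∈ Set.Icc (0:ℝ) τbar, ∀ σ : ℝ, 0 < σ → σ ≤ σbar → ∀ x k : ℝ,
      |x - k| ≤ lam * σ * Real.sqrt τ →
        uBS₀ (μ * σ) τ x k + c * Real.exp x * σ ^ 2 * τ ≤ uBS₀ σ τ x k :=
  stmt_4_general c σbar lam μ hc hσbar hμ hμ1
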